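/- arXiv:math/0603611 — 2 statements merged into one kernel-verified Lean document; each statement's English description precedes it below -/
import Mathlib

section
/- Let D be a Hermitian inner product on ℂ² and let d be a nonzero alternating bilinear form on ℂ². Define d^{ij} as the entries of the inverse of the matrix (d_{ij}) in the standard basis, and define D^{i j̄} = Σ_{p,q} d^{ip} · conj(d^{j̄q̄}) · D_{p q̄}. Then the matrix (D^{i j̄}) is the inverse of (D_{i j̄}) (i.e., Σ_{ā} D^{i ā} D_{j ā} = δ^i_j) if and only if there exists a basis (e₁, e₂) of ℂ² that is orthonormal for D and satisfies d(e₁, e₂) = 1. -/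
open BigOperators Matrix

theorem stmt_0
    (D : (Fin 2 → ℂ) →ₛₗ[starRingEnd ℂ] (Fin 2 → ℂ) →ₗ[ℂ] ℂ)
    (hHerm : ∀ x y, D y x = starRingEnd ℂ (D x y))
    (hPos : ∀ x, x ≠ 0 → 0 < (D x x).re)
    (d : (Fin 2 → ℂ) [⋀^Fin 2]→ₗ[ℂ] ℂ)
    (hd : d ≠ 0)
    (Dm dm : Matrix (Fin 2) (Fin 2) ℂ)
    (hDm : ∀ i j, Dm i j = D (Pi.single i 1) (Pi.single j 1))
    (hdm : ∀ i j, dm i j = d ![Pi.single i 1, Pi.single j 1])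
    (Dup : Matrix (Fin 2) (Fin 2) ℂ)
    (hDup : ∀ i j, Dup i j =
      ∑ p, ∑ q, dm⁻¹ i p * starRingEnd ℂ (dm⁻¹ j q) * Dm p q) :
    (∀ i j, ∑ a, Dup i a * Dm j a = if i = j then 1 else 0) ↔
    ∃ b : Module.Basis (Fin 2) ℂ (Fin 2 → ℂ),
      (∀ i j, D (b i) (b j) = if i = j then 1 else 0) ∧ d ![b 0, b 1] = 1 := by
  set c : ℂ := dm 0 1 with hc
  set A : ℂ := Dm 0 0 with hA
  set B : ℂ := Dm 0 1 with hB
  set B' : ℂ := Dm 1 0 with hB'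
  set Dd : ℂ := Dm 1 1 with hDd
  -- basic formula for d
  have hbfun : ⇑(Pi.basisFun ℂ (Fin 2)) = ![Pi.single 0 1, Pi.single 1 1] := by
    funext i; fin_cases i <;> simp [Pi.basisFun_apply]
  have hdf : ∀ x y : Fin 2 → ℂ, d ![x, y] = (x 0 * y 1 - x 1 * y 0) * c := by
    intro x y
    have h := d.eq_smul_basis_det (Pi.basisFun ℂ (Fin 2))
    conv_lhs => rw [h]
    rw [AlternatingMap.smul_apply, Pi.basisFun_det, hbfun, smul_eq_mul,
      show (detRowAlternating ![x, y] : ℂ) = Matrix.det (Matrix.of ![x, y]) from rfl,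
      Matrix.det_fin_two, hc, hdm]
    simp only [Matrix.of_apply, Matrix.cons_val', Matrix.cons_val_zero, Matrix.cons_val_one,
      Matrix.head_cons, Matrix.empty_val', Matrix.cons_val_fin_one, Matrix.head_fin_const]
    ring
  -- basic formula for D
  have hDf : ∀ x y : Fin 2 → ℂ,
      D x y = starRingEnd ℂ (x 0) * y 0 * A + starRingEnd ℂ (x 0) * y 1 * B
        + starRingEnd ℂ (x 1) * y 0 * B' + starRingEnd ℂ (x 1) * y 1 * Dd := by
    intro x y
    have hx : x = x 0 • (Pi.single 0 1 : Fin 2 → ℂ) + x 1 • (Pi.single 1 1 : Fin 2 → ℂ) := by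
      funext i; fin_cases i <;> simp
    have hy : y = y 0 • (Pi.single 0 1 : Fin 2 → ℂ) + y 1 • (Pi.single 1 1 : Fin 2 → ℂ) := by
      funext i; fin_cases i <;> simp
    conv_lhs => rw [hx, hy]
    simp only [map_add, LinearMap.map_smulₛₗ, LinearMap.add_apply, LinearMap.smul_apply,
      RingHom.id_apply, smul_eq_mul, hA, hB, hB', hDd, hDm]
    ring
  -- c ≠ 0
  have hc0 : c ≠ 0 := by
    intro h
    apply hd
    rw [← AlternatingMap.map_basis_eq_zero_iff (Pi.basisFun ℂ (Fin 2))]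
    rw [hbfun, ← hdm 0 1, ← hc, h]
  -- Hermitian facts
  have hBB : B' = starRingEnd ℂ B := by
    rw [hB', hB, hDm, hDm, hHerm]
  have hAA : starRingEnd ℂ A = A := by
    rw [hA, hDm]; exact (hHerm _ _).symm
  have hAre : (A.re : ℂ) = A := Complex.conj_eq_iff_re.mp hAA
  have hApos : 0 < A.re := by
    rw [hA, hDm]
    apply hPos
    intro h
    have := congrFun h 0
    simp at this
  -- dm entries
  have hdm00 : dm 0 0 = 0 := by rw [hdm, hdf]; simp
  have hdm01 : dm 0 1 = c := rfl
  have hdm10 : dm 1 0 = -c := by rw [hdm, hdf]; simp [hc, hdm]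
  have hdm11 : dm 1 1 = 0 := by rw [hdm, hdf]; simp
  -- inverse of dm
  have hdminv : dm⁻¹ = !![0, -c⁻¹; c⁻¹, 0] := by
    apply Matrix.inv_eq_right_inv
    ext i j
    fin_cases i <;> fin_cases j <;>
      simp [Matrix.mul_apply, Fin.sum_univ_two, hdm00, hdm01, hdm10, hdm11, hc0,
        mul_comm]
  have hconjc0 : starRingEnd ℂ c ≠ 0 := by
    simpa using hc0
  -- Dup entries
  have hDup00 : Dup 0 0 = c⁻¹ * (starRingEnd ℂ c)⁻¹ * Dd := by
    rw [hDup]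
    simp [Fin.sum_univ_two, hdminv, map_inv₀, map_neg, hDd]
  have hDup01 : Dup 0 1 = -(c⁻¹ * (starRingEnd ℂ c)⁻¹ * B') := by
    rw [hDup]
    simp [Fin.sum_univ_two, hdminv, map_inv₀, map_neg, hB']
  have hDup10 : Dup 1 0 = -(c⁻¹ * (starRingEnd ℂ c)⁻¹ * B) := by
    rw [hDup]
    simp [Fin.sum_univ_two, hdminv, map_inv₀, map_neg, hB]
  have hDup11 : Dup 1 1 = c⁻¹ * (starRingEnd ℂ c)⁻¹ * A := by
    rw [hDup]
    simp [Fin.sum_univ_two, hdminv, map_inv₀, map_neg, hA]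
  -- the key condition
  have h3 : (∀ i j, ∑ a, Dup i a * Dm j a = if i = j then 1 else 0) ↔
      A * Dd - B * B' = c * starRingEnd ℂ c := by
    constructor
    · intro h
      have h00 := h 0 0
      rw [Fin.sum_univ_two, hDup00, hDup01, ← hA, ← hB, if_pos rfl] at h00
      field_simp at h00
      linear_combination h00
    · intro key i j
      have e00 : ∑ a, Dup 0 a * Dm 0 a = 1 := by
        rw [Fin.sum_univ_two, hDup00, hDup01, ← hA, ← hB]
        field_simp
        linear_combination key
      have e01 : ∑ a, Dup 0 a * Dm 1 a = 0 := by
        rw [Fin.sum_univ_two, hDup00, hDup01, ← hB', ← hDd]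
        ring
      have e10 : ∑ a, Dup 1 a * Dm 0 a = 0 := by
        rw [Fin.sum_univ_two, hDup10, hDup11, ← hA, ← hB]
        ring
      have e11 : ∑ a, Dup 1 a * Dm 1 a = 1 := by
        rw [Fin.sum_univ_two, hDup10, hDup11, ← hB', ← hDd]
        field_simp
        linear_combination key
      fin_cases i <;> fin_cases j
      · simpa using e00
      · simpa using e01
      · simpa using e10
      · simpa using e11
  rw [h3]
  constructor
  · -- construction of the orthonormal basis
    intro key
    set cb : ℂ := starRingEnd ℂ c with hcb
    have habs : (0:ℝ) < ‖c‖ := norm_pos_iff.mpr hc0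
    set t : ℝ := ‖c‖ * Real.sqrt A.re with ht
    have htpos : (0:ℝ) < t := by
      rw [ht]; positivity
    have ht0 : (t:ℂ) ≠ 0 := by
      simp only [ne_eq, Complex.ofReal_eq_zero]
      exact htpos.ne'
    have ht2 : (t:ℂ) * (t:ℂ) = c * cb * A := by
      have h1 : ((t:ℝ):ℂ) = (‖c‖ : ℂ) * ((Real.sqrt A.re : ℝ) : ℂ) := by
        rw [ht]; push_cast; ring
      have hca2 : (‖c‖ : ℂ) * (‖c‖ : ℂ) = c * cb := by
        rw [← Complex.ofReal_mul, ← pow_two, Complex.sq_norm, hcb, Complex.mul_conj]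
      have hsa2 : ((Real.sqrt A.re : ℝ):ℂ) * ((Real.sqrt A.re : ℝ):ℂ) = A := by
        rw [← Complex.ofReal_mul, Real.mul_self_sqrt hApos.le, hAre]
      rw [h1]
      linear_combination ((Real.sqrt A.re : ℝ):ℂ) * ((Real.sqrt A.re : ℝ):ℂ) * hca2
        + (c * cb) * hsa2
    have htc : starRingEnd ℂ ((t:ℝ):ℂ) = ((t:ℝ):ℂ) := Complex.conj_ofReal t
    have hc1 : starRingEnd ℂ (cb/((t:ℝ):ℂ)) = c/((t:ℝ):ℂ) := by
      rw [map_div₀, htc, hcb, Complex.conj_conj]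
    have hc2 : starRingEnd ℂ (-(B/((t:ℝ):ℂ))) = -(B'/((t:ℝ):ℂ)) := by
      rw [map_neg, map_div₀, htc, ← hBB]
    have hc3 : starRingEnd ℂ (A/((t:ℝ):ℂ)) = A/((t:ℝ):ℂ) := by
      rw [map_div₀, htc, hAA]
    set v0 : Fin 2 → ℂ := ![cb/((t:ℝ):ℂ), 0] with hv0
    set v1 : Fin 2 → ℂ := ![-(B/((t:ℝ):ℂ)), A/((t:ℝ):ℂ)] with hv1
    have hcv00 : v0 0 = cb/((t:ℝ):ℂ) := by rw [hv0]; simp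
    have hcv01 : v0 1 = 0 := by rw [hv0]; simp
    have hcv10 : v1 0 = -(B/((t:ℝ):ℂ)) := by rw [hv1]; simp
    have hcv11 : v1 1 = A/((t:ℝ):ℂ) := by rw [hv1]; simp
    have hD00 : D v0 v0 = 1 := by
      rw [hDf, hcv00, hcv01, hc1, map_zero]
      field_simp
      linear_combination -ht2
    have hD01 : D v0 v1 = 0 := by
      rw [hDf, hcv00, hcv01, hcv10, hcv11, hc1, map_zero]
      ring
    have hD10 : D v1 v0 = 0 := by
      rw [hDf, hcv00, hcv01, hcv10, hcv11, hc2, hc3]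
      rw [hBB]
      ring
    have hD11 : D v1 v1 = 1 := by
      rw [hDf, hcv10, hcv11, hc2, hc3]
      field_simp
      linear_combination A * key - ht2
    have hdv : d ![v0, v1] = 1 := by
      rw [hdf, hcv00, hcv01, hcv10, hcv11]
      field_simp
      linear_combination -ht2
    have li : LinearIndependent ℂ ![v0, v1] := by
      by_contra h
      have h2 := d.map_linearDependent ![v0, v1] h
      rw [hdv] at h2
      exact one_ne_zero h2
    have hcard : Fintype.card (Fin 2) = Module.finrank ℂ (Fin 2 → ℂ) := by
      simp
    refine ⟨basisOfLinearIndependentOfCardEqFinrank li hcard, ?_, ?_⟩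
    · have hbe : ⇑(basisOfLinearIndependentOfCardEqFinrank li hcard) = ![v0, v1] :=
        coe_basisOfLinearIndependentOfCardEqFinrank _ _
      intro i j
      fin_cases i <;> fin_cases j <;>
        rw [hbe] <;>
        norm_num [hD00, hD01, hD10, hD11]
    · have hbe : ⇑(basisOfLinearIndependentOfCardEqFinrank li hcard) = ![v0, v1] :=
        coe_basisOfLinearIndependentOfCardEqFinrank _ _
      rw [hbe]
      simpa using hdv
  · -- basis → key
    rintro ⟨b, hb1, hb2⟩
    set p : ℂ := b 0 0 with hp
    set q : ℂ := b 0 1 with hq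
    set r : ℂ := b 1 0 with hr
    set s : ℂ := b 1 1 with hs
    have E00 := hb1 0 0
    have E01 := hb1 0 1
    have E10 := hb1 1 0
    have E11 := hb1 1 1
    rw [hDf, if_pos rfl] at E00 E11
    rw [hDf, if_neg (by norm_num)] at E01 E10
    rw [hdf] at hb2
    have hb2' := congrArg (starRingEnd ℂ) hb2
    simp only [_root_.map_mul, map_sub, _root_.map_one] at hb2'
    have prod : (starRingEnd ℂ p * p * A + starRingEnd ℂ p * q * B
          + starRingEnd ℂ q * p * B' + starRingEnd ℂ q * q * Dd)
        * (starRingEnd ℂ r * r * A + starRingEnd ℂ r * s * B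
          + starRingEnd ℂ s * r * B' + starRingEnd ℂ s * s * Dd)
        - (starRingEnd ℂ p * r * A + starRingEnd ℂ p * s * B
          + starRingEnd ℂ q * r * B' + starRingEnd ℂ q * s * Dd)
        * (starRingEnd ℂ r * p * A + starRingEnd ℂ r * q * B
          + starRingEnd ℂ s * p * B' + starRingEnd ℂ s * q * Dd) = 1 := by
      rw [E00, E01, E10, E11]; ring
    have key' : (A * Dd - B * B') * ((p * s - q * r)
        * (starRingEnd ℂ p * starRingEnd ℂ s - starRingEnd ℂ q * starRingEnd ℂ r)) = 1 := by
      linear_combination prod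
    have hX : p * s - q * r = c⁻¹ := eq_inv_of_mul_eq_one_left hb2
    have hY : starRingEnd ℂ p * starRingEnd ℂ s - starRingEnd ℂ q * starRingEnd ℂ r
        = (starRingEnd ℂ c)⁻¹ := by
      apply eq_inv_of_mul_eq_one_left
      linear_combination hb2'
    rw [hX, hY] at key'
    field_simp at key'
    linear_combination key'
end

section
/- Let D be a Hermitian inner product on ℂ³ and δ a nonzero alternating trilinear form on ℂ³ that are concordant, i.e., Σ_{i,j,k} δ^{ijk} D_{i ī} D_{j j̄} D_{k k̄} = conj(δ_{ī j̄ k̄}) holds in every basis. If (e₁,e₂,e₃) is a basis orthonormal for D, then |δ(e₁,e₂,e₃)| = 1. -/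
open BigOperators Matrix

theorem stmt_10
    (D : (Fin 3 → ℂ) →ₛₗ[starRingEnd ℂ] (Fin 3 → ℂ) →ₗ[ℂ] ℂ)
    (hHerm : ∀ x y, D y x = starRingEnd ℂ (D x y))
    (hPos : ∀ x, x ≠ 0 → 0 < (D x x).re)
    (δ : (Fin 3 → ℂ) [⋀^Fin 3]→ₗ[ℂ] ℂ)
    (hδ : δ ≠ 0)
    (hconc : ∀ b : Module.Basis (Fin 3) ℂ (Fin 3 → ℂ),
      ∀ du : Fin 3 → Fin 3 → Fin 3 → ℂ,
        (∀ i j k, du i j k = - du j i k) →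
        (∀ i j k, du i j k = - du i k j) →
        du 0 1 2 * δ ![b 0, b 1, b 2] = 1 →
        ∀ i' j' k', ∑ i, ∑ j, ∑ k,
          du i j k * D (b i) (b i') * D (b j) (b j') * D (b k) (b k') =
            starRingEnd ℂ (δ ![b i', b j', b k']))
    (e : Module.Basis (Fin 3) ℂ (Fin 3 → ℂ))
    (he : ∀ i j, D (e i) (e j) = if i = j then 1 else 0) :
    ‖δ ![e 0, e 1, e 2]‖ = 1 := by
  set c : ℂ := δ ![e 0, e 1, e 2] with hc
  have hec : (![e 0, e 1, e 2] : Fin 3 → Fin 3 → ℂ) = ⇑e := by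
    funext i; fin_cases i <;> simp
  have hcne : c ≠ 0 := by
    intro h0
    apply hδ
    have := δ.eq_smul_basis_det e
    rw [show δ ⇑e = 0 from by rw [← hec]; exact h0] at this
    simpa using this
  set du : Fin 3 → Fin 3 → Fin 3 → ℂ := fun i j k =>
    c⁻¹ * (((j.val : ℂ) - i.val) * ((k.val : ℂ) - j.val) * ((k.val : ℂ) - i.val) / 2) with hdu
  have h1 : ∀ i j k, du i j k = - du j i k := by intro i j k; simp only [hdu]; ring
  have h2 : ∀ i j k, du i j k = - du i k j := by intro i j k; simp only [hdu]; ring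
  have h3 : du 0 1 2 * c = 1 := by
    simp only [hdu]
    norm_num
    exact inv_mul_cancel₀ hcne
  have key := hconc e du h1 h2 h3 0 1 2
  rw [← hc] at key
  simp only [he, Fin.sum_univ_three] at key
  norm_num [Fin.ext_iff] at key
  -- key : du 0 1 2 = conj c  (after simplification)
  have hinv : c⁻¹ = starRingEnd ℂ c := by
    have : du 0 1 2 = c⁻¹ := by simp only [hdu]; norm_num
    rw [this] at key; exact key
  have hmul : c * starRingEnd ℂ c = 1 := by
    rw [← hinv]; exact mul_inv_cancel₀ hcne
  have hsq : Complex.normSq c = 1 := by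
    have := Complex.mul_conj c
    rw [hmul] at this
    exact_mod_cast this.symm
  have : ‖c‖ = Real.sqrt 1 := by rw [Complex.norm_def, hsq]
  simpa using this
end
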